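/- Let n ≥ 3 be an integer, R_* > 1, and let ρ be a regular metric on [1,R_*]. For c < ρ(1) define Λ(c) = exp( ∫_1^{R_*} dy / ( y·√( Ψ( c/(y^n·ρ(y)) ) ) ) ). Then Λ is continuous and strictly increasing on (−∞, ρ(1)), and Λ(c) → 1 as c → −∞. -/

import Mathlib

/-- A `C¹` function `ρ : [1,R₁] → (0,∞)` is a *regular metric* if `s ↦ ρ(s)sⁿ`
is nondecreasing on `[1,R₁]` (so its minimum is `ρ(1)`). -/
def IsRegularMetric (n : ℕ) (R₁ : ℝ) (ρ : ℝ → ℝ) : Prop :=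
  ContDiffOn ℝ 1 ρ (Set.Icc 1 R₁) ∧ (∀ s ∈ Set.Icc 1 R₁, 0 < ρ s) ∧
    MonotoneOn (fun s => ρ s * s ^ n) (Set.Icc 1 R₁)

/-!
`Φ` is strictly decreasing on `[0, ∞)` with `Φ 0 = 1`
(`Φ' ζ = -(n / (2(n-1))) (1 + ζ) (1 + ζ/(n-1))^((n-4)/2)`), so `Ψ` is a strictly decreasing
bijection `(-∞, 1] → [0, ∞)`: continuous, positive on `(-∞, 1)` and tending to `∞` at `-∞`.
Since `yⁿ ρ(y) ≥ ρ(1) > 0`, for `c < ρ(1)` the integrand `1 / (y √Ψ(c / (yⁿ ρ(y))))` is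
continuous in `y`, and continuous, strictly increasing and tending to `0` as `c → -∞` in `c`.
The integrand at any fixed `c₁ < ρ(1)` dominates those at all `c ≤ c₁`, so dominated
convergence yields continuity of the integral and its limit `0` at `-∞`; `exp` carries all three
properties over to `Λ`.
-/

open Real Set Filter MeasureTheory Topology intervalIntegral

noncomputable def Phi (n ζ : ℝ) : ℝ :=
  (1 - ζ) * (1 + ζ / (n - 1)) ^ ((n - 2) / 2)

@[simp] lemma Phi_zero (n : ℝ) : Phi n 0 = 1 := by
  simp [Phi]

lemma hasDerivAt_Phi {n ζ : ℝ} (hn : 1 < n) (hζ : 0 < 1 + ζ / (n - 1)) :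
    HasDerivAt (Phi n)
      (-(n / (2 * (n - 1))) * (1 + ζ) * (1 + ζ / (n - 1)) ^ ((n - 2) / 2 - 1)) ζ := by
  have hB : HasDerivAt (fun x => 1 + x / (n - 1)) (1 / (n - 1)) ζ := by
    simpa using ((hasDerivAt_id ζ).div_const (n - 1)).const_add 1
  refine (((hasDerivAt_id' ζ).const_sub 1).mul
    (hB.rpow_const (p := (n - 2) / 2) (.inl hζ.ne'))).congr_deriv ?_
  have hsplit : (1 + ζ / (n - 1)) ^ ((n - 2) / 2)
      = (1 + ζ / (n - 1)) ^ ((n - 2) / 2 - 1) * (1 + ζ / (n - 1)) := by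
    rw [← rpow_add_one hζ.ne', sub_add_cancel]
  have : n - 1 ≠ 0 := by linarith
  rw [hsplit]
  field_simp
  ring

lemma Phi_strictAntiOn {n : ℝ} (hn : 1 < n) : StrictAntiOn (Phi n) (Ici 0) := by
  have hB : ∀ ζ ∈ Ici (0 : ℝ), 0 < 1 + ζ / (n - 1) := fun ζ hζ => by
    have := div_nonneg (mem_Ici.1 hζ) (sub_pos.2 hn).le
    linarith
  refine strictAntiOn_of_deriv_neg (convex_Ici 0)
    (fun ζ hζ => (hasDerivAt_Phi hn (hB ζ hζ)).continuousAt.continuousWithinAt) fun ζ hζ => ?_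
  rw [interior_Ici] at hζ
  rw [(hasDerivAt_Phi hn (hB ζ (mem_Ici_of_Ioi hζ))).deriv]
  have hc : 0 < n / (2 * (n - 1)) := div_pos (by linarith) (by linarith)
  have hζ' : 0 < 1 + ζ := by linarith [mem_Ioi.1 hζ]
  have hp := rpow_pos_of_pos (hB ζ (mem_Ici_of_Ioi hζ)) ((n - 2) / 2 - 1)
  exact mul_neg_of_neg_of_pos (mul_neg_of_neg_of_pos (neg_neg_of_pos hc) hζ') hp

lemma Phi_le_one {n K : ℝ} (hn : 1 < n) (hK : 0 ≤ K) : Phi n K ≤ 1 := by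
  simpa using (Phi_strictAntiOn hn).antitoneOn self_mem_Ici hK hK

-- By injectivity of `Phi` on `[0, ∞)`, this determines `Ψ` on `(-∞, 1]`.
def IsPhiInverse (n : ℝ) (Ψ : ℝ → ℝ) : Prop :=
  ∀ ζ ≤ 1, 0 ≤ Ψ ζ ∧ Phi n (Ψ ζ) = ζ

namespace IsPhiInverse

variable {n : ℝ} {Ψ : ℝ → ℝ}

lemma pos (hΨ : IsPhiInverse n Ψ) {ζ : ℝ} (hζ : ζ < 1) : 0 < Ψ ζ := by
  refine (hΨ ζ hζ.le).1.lt_of_ne fun h => hζ.ne ?_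
  rw [← (hΨ ζ hζ.le).2, ← h, Phi_zero]

lemma strictAntiOn (hΨ : IsPhiInverse n Ψ) (hn : 1 < n) : StrictAntiOn Ψ (Iic 1) :=
  fun ζ₁ h₁ ζ₂ h₂ h12 => by
    rwa [← (Phi_strictAntiOn hn).lt_iff_gt (hΨ ζ₁ h₁).1 (hΨ ζ₂ h₂).1, (hΨ ζ₁ h₁).2,
      (hΨ ζ₂ h₂).2]

lemma le_of_le_Phi (hΨ : IsPhiInverse n Ψ) (hn : 1 < n) {K ζ : ℝ} (hK : 0 ≤ K)
    (hζ : ζ ≤ Phi n K) : K ≤ Ψ ζ := by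
  have hζ1 := hΨ ζ (hζ.trans (Phi_le_one hn hK))
  rwa [← (Phi_strictAntiOn hn).le_iff_ge hζ1.1 hK, hζ1.2]

lemma apply_Phi (hΨ : IsPhiInverse n Ψ) (hn : 1 < n) {K : ℝ} (hK : 0 ≤ K) :
    Ψ (Phi n K) = K :=
  (Phi_strictAntiOn hn).injOn (hΨ _ (Phi_le_one hn hK)).1 hK (hΨ _ (Phi_le_one hn hK)).2

lemma continuousOn (hΨ : IsPhiInverse n Ψ) (hn : 1 < n) : ContinuousOn Ψ (Iio 1) := by
  intro z hz
  have hmono : MonotoneOn (-Ψ) (Iio 1) := fun ζ₁ h₁ ζ₂ h₂ h12 =>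
    neg_le_neg ((hΨ.strictAntiOn hn).antitoneOn (mem_Iic_of_Iio h₁) (mem_Iic_of_Iio h₂) h12)
  have himage : (-Ψ) '' Iio 1 ∈ 𝓝 ((-Ψ) z) := by
    refine mem_of_superset (Iio_mem_nhds (neg_neg_of_pos (hΨ.pos hz))) fun K hK => ?_
    have hK' : 0 ≤ -K := by linarith [mem_Iio.1 hK]
    refine ⟨Phi n (-K), ?_, by rw [Pi.neg_apply, hΨ.apply_Phi hn hK', neg_neg]⟩
    simpa using (Phi_strictAntiOn hn) self_mem_Ici hK' (neg_pos.2 hK)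
  have h := continuousAt_of_monotoneOn_of_image_mem_nhds hmono (Iio_mem_nhds hz) himage
  simpa using h.neg.continuousWithinAt

lemma tendsto_atBot (hΨ : IsPhiInverse n Ψ) (hn : 1 < n) : Tendsto Ψ atBot atTop := by
  refine tendsto_atBot_atTop.2 fun K => ⟨Phi n (max K 0), fun ζ hζ => ?_⟩
  exact (le_max_left K 0).trans (hΨ.le_of_le_Phi hn (le_max_right K 0) hζ)

end IsPhiInverse

section MonotoneFamily

variable {F : ℝ → ℝ → ℝ} {a b m : ℝ}

theorem tendsto_integral_of_monotoneOn_param {l : Filter ℝ} [l.IsCountablyGenerated]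
    {g : ℝ → ℝ} {c₁ : ℝ} (hF : ∀ c < m, ContinuousOn (F c) (uIcc a b))
    (hmono : ∀ y ∈ uIcc a b, MonotoneOn (F · y) (Iio m))
    (hnonneg : ∀ c < m, ∀ y ∈ uIcc a b, 0 ≤ F c y) (hc₁ : c₁ < m) (hl : ∀ᶠ c in l, c ≤ c₁)
    (hlim : ∀ y ∈ uIcc a b, Tendsto (F · y) l (𝓝 (g y))) :
    Tendsto (fun c => ∫ y in a..b, F c y) l (𝓝 (∫ y in a..b, g y)) := by
  refine tendsto_integral_filter_of_dominated_convergence (F c₁) ?_ ?_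
    (hF c₁ hc₁).intervalIntegrable (ae_of_all _ fun y hy => hlim y (uIoc_subset_uIcc hy))
  · filter_upwards [hl] with c hc
    exact ((hF c (hc.trans_lt hc₁)).mono uIoc_subset_uIcc).aestronglyMeasurable measurableSet_uIoc
  · filter_upwards [hl] with c hc
    refine ae_of_all _ fun y hy => ?_
    rw [norm_of_nonneg (hnonneg c (hc.trans_lt hc₁) y (uIoc_subset_uIcc hy))]
    exact hmono y (uIoc_subset_uIcc hy) (hc.trans_lt hc₁) hc₁ hc

theorem continuousOn_integral_of_monotoneOn_param (hF : ∀ c < m, ContinuousOn (F c) (uIcc a b))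
    (hmono : ∀ y ∈ uIcc a b, MonotoneOn (F · y) (Iio m))
    (hnonneg : ∀ c < m, ∀ y ∈ uIcc a b, 0 ≤ F c y)
    (hcont : ∀ y ∈ uIcc a b, ContinuousOn (F · y) (Iio m)) :
    ContinuousOn (fun c => ∫ y in a..b, F c y) (Iio m) := by
  intro c₀ hc₀
  have hc₀ : c₀ < m := hc₀
  refine ContinuousAt.continuousWithinAt <| tendsto_integral_of_monotoneOn_param hF hmono hnonneg
    (c₁ := (c₀ + m) / 2) (by linarith) (Iic_mem_nhds (by linarith))
    fun y hy => (hcont y hy).continuousAt (Iio_mem_nhds hc₀)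

theorem tendsto_integral_atBot_of_monotoneOn_param
    (hF : ∀ c < m, ContinuousOn (F c) (uIcc a b))
    (hmono : ∀ y ∈ uIcc a b, MonotoneOn (F · y) (Iio m))
    (hnonneg : ∀ c < m, ∀ y ∈ uIcc a b, 0 ≤ F c y)
    (hlim : ∀ y ∈ uIcc a b, Tendsto (F · y) atBot (𝓝 0)) :
    Tendsto (fun c => ∫ y in a..b, F c y) atBot (𝓝 0) := by
  simpa using tendsto_integral_of_monotoneOn_param hF hmono hnonneg (sub_one_lt m)
    (eventually_le_atBot (m - 1)) hlim

theorem strictMonoOn_integral_of_strictMonoOn_param (hab : a < b)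
    (hF : ∀ c < m, ContinuousOn (F c) (uIcc a b))
    (hmono : ∀ y ∈ uIcc a b, StrictMonoOn (F · y) (Iio m)) :
    StrictMonoOn (fun c => ∫ y in a..b, F c y) (Iio m) := by
  intro c₁ hc₁ c₂ hc₂ h12
  have hint : ∀ c ∈ Iio m, IntervalIntegrable (F c) volume a b :=
    fun c hc => (hF c hc).intervalIntegrable
  have hpos := intervalIntegral_pos_of_pos_on ((hint c₂ hc₂).sub (hint c₁ hc₁))
    (fun y hy => sub_pos.2 (hmono y (Icc_subset_uIcc (Ioo_subset_Icc_self hy)) hc₁ hc₂ h12)) hab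
  rw [integral_sub (hint c₂ hc₂) (hint c₁ hc₁)] at hpos
  exact sub_pos.1 hpos

end MonotoneFamily

noncomputable def lambdaIntegrand (Ψ D : ℝ → ℝ) (c y : ℝ) : ℝ :=
  1 / (y * √(Ψ (c / D y)))

section LambdaIntegrand

variable {Ψ D : ℝ → ℝ}

lemma lambdaIntegrand_nonneg {y : ℝ} (hy : 0 ≤ y) (c : ℝ) : 0 ≤ lambdaIntegrand Ψ D c y :=
  one_div_nonneg.2 (mul_nonneg hy (sqrt_nonneg _))

lemma continuousOn_lambdaIntegrand {s : Set ℝ} {c : ℝ} (hΨ : ContinuousOn Ψ (Iio 1))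
    (hΨpos : ∀ ζ < 1, 0 < Ψ ζ) (hD : ContinuousOn D s) (hs : ∀ y ∈ s, 0 < y)
    (hD₀ : ∀ y ∈ s, 0 < D y) (hcD : ∀ y ∈ s, c < D y) :
    ContinuousOn (lambdaIntegrand Ψ D c) s := by
  have hlt : ∀ y ∈ s, c / D y < 1 := fun y hy => (div_lt_one (hD₀ y hy)).2 (hcD y hy)
  refine continuousOn_const.div (continuousOn_id.mul
    (hΨ.comp (continuousOn_const.div hD fun y hy => (hD₀ y hy).ne') hlt).sqrt) fun y hy => ?_
  exact (mul_pos (hs y hy) (sqrt_pos.2 (hΨpos _ (hlt y hy)))).ne'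

lemma continuousOn_lambdaIntegrand_param {y : ℝ} (hΨ : ContinuousOn Ψ (Iio 1))
    (hΨpos : ∀ ζ < 1, 0 < Ψ ζ) (hy : 0 < y) (hDy : 0 < D y) :
    ContinuousOn (lambdaIntegrand Ψ D · y) (Iio (D y)) := by
  have hlt : ∀ c ∈ Iio (D y), c / D y < 1 := fun c hc => (div_lt_one hDy).2 hc
  refine continuousOn_const.div (continuousOn_const.mul
    (hΨ.comp (continuousOn_id.div_const _) hlt).sqrt) fun c hc => ?_
  exact (mul_pos hy (sqrt_pos.2 (hΨpos _ (hlt c hc)))).ne'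

lemma strictMonoOn_lambdaIntegrand_param {y : ℝ} (hΨ : StrictAntiOn Ψ (Iio 1))
    (hΨpos : ∀ ζ < 1, 0 < Ψ ζ) (hy : 0 < y) (hDy : 0 < D y) :
    StrictMonoOn (lambdaIntegrand Ψ D · y) (Iio (D y)) := by
  intro c₁ hc₁ c₂ hc₂ h12
  have hlt : ∀ c ∈ Iio (D y), c / D y < 1 := fun c hc => (div_lt_one hDy).2 hc
  have hΨlt := hΨ (hlt c₁ hc₁) (hlt c₂ hc₂) (div_lt_div_of_pos_right h12 hDy)
  have hpos := hΨpos _ (hlt c₂ hc₂)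
  exact one_div_lt_one_div_of_lt (by positivity)
    (mul_lt_mul_of_pos_left (sqrt_lt_sqrt hpos.le hΨlt) hy)

lemma tendsto_lambdaIntegrand_atBot {y : ℝ} (hΨ : Tendsto Ψ atBot atTop) (hy : 0 < y)
    (hDy : 0 < D y) : Tendsto (lambdaIntegrand Ψ D · y) atBot (𝓝 0) := by
  have h : Tendsto (fun c => y * √(Ψ (c / D y))) atBot atTop :=
    (tendsto_sqrt_atTop.comp (hΨ.comp (tendsto_id.atBot_div_const hDy))).const_mul_atTop hy
  exact h.inv_tendsto_atTop.congr fun c => (one_div _).symm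

end LambdaIntegrand

theorem integral_lambdaIntegrand {Ψ D : ℝ → ℝ} {a b m : ℝ} (ha : 0 < a) (hab : a < b)
    (hD : ContinuousOn D (Icc a b)) (hm : 0 < m) (hDm : ∀ y ∈ Icc a b, m ≤ D y)
    (hΨcont : ContinuousOn Ψ (Iio 1)) (hΨanti : StrictAntiOn Ψ (Iio 1))
    (hΨpos : ∀ ζ < 1, 0 < Ψ ζ) (hΨlim : Tendsto Ψ atBot atTop) :
    ContinuousOn (fun c => ∫ y in a..b, lambdaIntegrand Ψ D c y) (Iio m) ∧
      StrictMonoOn (fun c => ∫ y in a..b, lambdaIntegrand Ψ D c y) (Iio m) ∧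
      Tendsto (fun c => ∫ y in a..b, lambdaIntegrand Ψ D c y) atBot (𝓝 0) := by
  rw [← uIcc_of_le hab.le] at hD hDm
  have hy₀ : ∀ y ∈ uIcc a b, 0 < y := fun y hy =>
    ha.trans_le (uIcc_of_le hab.le ▸ hy).1
  have hD₀ : ∀ y ∈ uIcc a b, 0 < D y := fun y hy => hm.trans_le (hDm y hy)
  have hsub : ∀ y ∈ uIcc a b, Iio m ⊆ Iio (D y) := fun y hy => Iio_subset_Iio (hDm y hy)
  have hF : ∀ c < m, ContinuousOn (lambdaIntegrand Ψ D c) (uIcc a b) := fun c hc =>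
    continuousOn_lambdaIntegrand hΨcont hΨpos hD hy₀ hD₀ fun y hy => hc.trans_le (hDm y hy)
  have hmono : ∀ y ∈ uIcc a b, StrictMonoOn (lambdaIntegrand Ψ D · y) (Iio m) := fun y hy =>
    (strictMonoOn_lambdaIntegrand_param hΨanti hΨpos (hy₀ y hy) (hD₀ y hy)).mono (hsub y hy)
  have hnonneg : ∀ c < m, ∀ y ∈ uIcc a b, 0 ≤ lambdaIntegrand Ψ D c y :=
    fun c _ y hy => lambdaIntegrand_nonneg (hy₀ y hy).le c
  refine ⟨continuousOn_integral_of_monotoneOn_param hF (fun y hy => (hmono y hy).monotoneOn)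
      hnonneg fun y hy => ?_, strictMonoOn_integral_of_strictMonoOn_param hab hF hmono,
    tendsto_integral_atBot_of_monotoneOn_param hF (fun y hy => (hmono y hy).monotoneOn) hnonneg
      fun y hy => tendsto_lambdaIntegrand_atBot hΨlim (hy₀ y hy) (hD₀ y hy)⟩
  exact (continuousOn_lambdaIntegrand_param hΨcont hΨpos (hy₀ y hy) (hD₀ y hy)).mono (hsub y hy)

/-- For a regular metric `ρ` on `[1,R_*]`, the function
`Λ(c) = exp(∫_1^{R_*} dy/(y √(Ψ(c/(yⁿ ρ(y))))))` is continuous and strictly increasing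
on `(-∞, ρ(1))`, and `Λ(c) → 1` as `c → -∞`. Here `Ψ` is the inverse of
`Φ(ζ) = (1 - ζ)(1 + ζ/(n-1))^{(n-2)/2}`. -/
theorem stmt8 (n : ℕ) (hn : 3 ≤ n) (Rs : ℝ) (hRs : 1 < Rs)
    (ρ : ℝ → ℝ) (hρ : IsRegularMetric n Rs ρ)
    (Ψ : ℝ → ℝ)
    (hΨ : ∀ ζ ≤ (1:ℝ), 0 ≤ Ψ ζ ∧
      (1 - Ψ ζ) * (1 + Ψ ζ / ((n : ℝ) - 1)) ^ (((n : ℝ) - 2) / 2) = ζ)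
    (Λ : ℝ → ℝ)
    (hΛ : ∀ c < ρ 1, Λ c =
      Real.exp (∫ y in (1:ℝ)..Rs, 1 / (y * Real.sqrt (Ψ (c / (y ^ n * ρ y)))))) :
    ContinuousOn Λ (Set.Iio (ρ 1)) ∧ StrictMonoOn Λ (Set.Iio (ρ 1)) ∧
    Filter.Tendsto Λ Filter.atBot (nhds 1) := by
  obtain ⟨hρC1, hρpos, hρmono⟩ := hρ
  have hn' : (1 : ℝ) < n := by exact_mod_cast (by omega : 1 < n)
  have hΨ' : IsPhiInverse n Ψ := hΨ
  have hD : ∀ y ∈ Icc 1 Rs, ρ 1 ≤ y ^ n * ρ y := fun y hy => by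
    simpa [mul_comm] using hρmono (left_mem_Icc.2 hRs.le) hy hy.1
  obtain ⟨hcont, hmono, hlim⟩ := integral_lambdaIntegrand (D := fun y => y ^ n * ρ y) one_pos hRs
    ((continuousOn_pow n).mul hρC1.continuousOn) (hρpos 1 (left_mem_Icc.2 hRs.le)) hD
    (hΨ'.continuousOn hn') ((hΨ'.strictAntiOn hn').mono Iio_subset_Iic_self)
    (fun _ => hΨ'.pos) (hΨ'.tendsto_atBot hn')
  have hΛ' : EqOn (fun c => exp (∫ y in 1..Rs, lambdaIntegrand Ψ (fun y => y ^ n * ρ y) c y))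
      Λ (Iio (ρ 1)) := fun c hc => (hΛ c hc).symm
  refine ⟨(continuous_exp.comp_continuousOn hcont).congr hΛ'.symm,
    (exp_strictMono.comp_strictMonoOn hmono).congr hΛ', ?_⟩
  rw [← exp_zero]
  exact ((continuous_exp.tendsto 0).comp hlim).congr' (eventuallyEq_of_mem (Iio_mem_atBot _) hΛ')
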